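/- Let ρ and σ be density operators on a finite-dimensional Hilbert space and let Π be an operator with 0 ≤ Π ≤ I. Then |√(Tr(Πσ)) − √(Tr(Πρ))| ≤ P(ρ,σ), where P(ρ,σ) = √(1 − F(ρ,σ)²) is the purified distance and F(ρ,σ) = ‖√ρ √σ‖₁ is the fidelity. -/

import Mathlib

/-!
By polar decomposition there is a contraction `W` with `Tr √(√σ ρ √σ) = Tr (W† √ρ √σ)`.
Inserting `1 = Λ + (1 - Λ)` between `√ρ` and `√σ` and applying Cauchy–Schwarz to each half
(using `W†W ≤ 1`) bounds the fidelity by the classical fidelity of the two-outcome measurement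
`{Λ, 1 - Λ}`: `F ≤ √(qp) + √((1-q)(1-p))` with `p = Tr Λρ`, `q = Tr Λσ`. Writing
`√p = cos α`, `√q = cos β`, this is `F ≤ cos (α - β)`, and `|cos β - cos α| ≤ |sin (α - β)|`.
-/

open Matrix Kronecker Complex ComplexOrder

noncomputable section

namespace QIT

open scoped Classical

variable {n : Type*} [Fintype n] [DecidableEq n]

/-- Square root of a positive semidefinite matrix (junk value `0` otherwise). -/
def msqrt (A : Matrix n n ℂ) : Matrix n n ℂ :=
  if h : A.PosSemidef then
    (h.1.eigenvectorUnitary : Matrix n n ℂ) *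
      Matrix.diagonal ((↑) ∘ (Real.sqrt ·) ∘ h.1.eigenvalues) *
      (star (h.1.eigenvectorUnitary : Matrix n n ℂ))
  else 0

/-- Fidelity `F(ρ,σ) = Tr √(√σ ρ √σ)`. -/
def fid (ρ σ : Matrix n n ℂ) : ℝ :=
  ((msqrt (msqrt σ * ρ * msqrt σ)).trace).re

/-- Purified distance `P(ρ,σ) = √(1 - F(ρ,σ)²)`. -/
def Pdist (ρ σ : Matrix n n ℂ) : ℝ := Real.sqrt (1 - fid ρ σ ^ 2)

/-- A density operator: positive semidefinite with unit trace. -/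
def IsDensity (ρ : Matrix n n ℂ) : Prop := ρ.PosSemidef ∧ ρ.trace = 1

/-- A test (POVM element): `0 ≤ Λ ≤ I`. -/
def IsTest (Λ : Matrix n n ℂ) : Prop := Λ.PosSemidef ∧ (1 - Λ).PosSemidef

/-- Smooth hypothesis testing divergence `D_H^ε(ρ‖σ)` (log base 2). -/
def DH (ε : ℝ) (ρ σ : Matrix n n ℂ) : ℝ :=
  sSup {x : ℝ | ∃ Λ : Matrix n n ℂ, IsTest Λ ∧ (Λ * ρ).trace.re ≥ 1 - ε ∧
    x = Real.logb 2 (1 / (Λ * σ).trace.re)}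

/-- Max-relative entropy `D_max(ρ‖σ)`. -/
def Dmax (ρ σ : Matrix n n ℂ) : ℝ :=
  sInf {l : ℝ | ((((2:ℝ) ^ l : ℝ) : ℂ) • σ - ρ).PosSemidef}

/-- Matrix logarithm (base 2) via the spectral decomposition. -/
def mlog (A : Matrix n n ℂ) : Matrix n n ℂ :=
  if h : A.IsHermitian then
    (h.eigenvectorUnitary : Matrix n n ℂ) *
      Matrix.diagonal (fun i => (Real.logb 2 (h.eigenvalues i) : ℂ)) *
      (h.eigenvectorUnitary : Matrix n n ℂ)ᴴ
  else 0

/-- Quantum relative entropy `D(ρ‖σ) = Tr ρ (log ρ - log σ)` (log base 2). -/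
def Drel (ρ σ : Matrix n n ℂ) : ℝ :=
  ((ρ * mlog ρ).trace - (ρ * mlog σ).trace).re

/-- Square root of the Moore–Penrose inverse, on the support. -/
def pinvSqrt (A : Matrix n n ℂ) : Matrix n n ℂ :=
  if h : A.IsHermitian then
    (h.eigenvectorUnitary : Matrix n n ℂ) *
      Matrix.diagonal (fun i =>
        ((if h.eigenvalues i = 0 then 0 else (Real.sqrt (h.eigenvalues i))⁻¹ : ℝ) : ℂ)) *
      (h.eigenvectorUnitary : Matrix n n ℂ)ᴴ
  else 0

variable {m : Type*} [Fintype m] [DecidableEq m]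

/-- Partial trace over the second tensor factor. -/
def ptraceSnd (ρ : Matrix (n × m) (n × m) ℂ) : Matrix n n ℂ :=
  Matrix.of fun i j => ∑ k, ρ (i, k) (j, k)

/-- Partial trace over the first tensor factor. -/
def ptraceFst (ρ : Matrix (n × m) (n × m) ℂ) : Matrix m m ℂ :=
  Matrix.of fun i j => ∑ k, ρ (k, i) (k, j)




open scoped MatrixOrder

section

variable {k : Type*} [Fintype k]

lemma re_trace_mono {A B : Matrix k k ℂ} (h : A ≤ B) : A.trace.re ≤ B.trace.re := by
  simpa [Matrix.trace_sub] using (Complex.le_def.mp (Matrix.le_iff.mp h).trace_nonneg).1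

variable [DecidableEq k]

lemma msqrt_eq_cfcSqrt {A : Matrix k k ℂ} (hA : A.PosSemidef) : msqrt A = CFC.sqrt A := by
  rw [msqrt, dif_pos hA, CFC.sqrt_eq_real_sqrt A hA.nonneg, cfcₙ_eq_cfc, hA.1.cfc_eq,
    Matrix.IsHermitian.cfc, Unitary.conjStarAlgAut_apply]
  rfl

lemma norm_trace_conjTranspose_mul_le (X Y : Matrix k k ℂ) :
    ‖(Xᴴ * Y).trace‖ ≤ √(Xᴴ * X).trace.re * √(Yᴴ * Y).trace.re := by
  let := Matrix.toMatrixSeminormedAddCommGroup (1 : Matrix k k ℂ) Matrix.PosSemidef.one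
  let := Matrix.toMatrixInnerProductSpace (1 : Matrix k k ℂ) Matrix.PosSemidef.one
  have hinner (A B : Matrix k k ℂ) : inner ℂ A B = (B * Aᴴ).trace := by
    show (B * 1 * Aᴴ).trace = _
    rw [Matrix.mul_one]
  have h := norm_inner_le_norm (𝕜 := ℂ) Yᴴ Xᴴ
  rw [norm_eq_sqrt_re_inner (𝕜 := ℂ) Yᴴ, norm_eq_sqrt_re_inner (𝕜 := ℂ) Xᴴ] at h
  simp only [hinner, Matrix.conjTranspose_conjTranspose] at h
  rwa [mul_comm √_] at h

lemma conjTranspose_cfcSqrt (A : Matrix k k ℂ) : (CFC.sqrt A)ᴴ = CFC.sqrt A :=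
  (CFC.sqrt_nonneg A).isSelfAdjoint

lemma re_trace_mul_nonneg {A B : Matrix k k ℂ} (hA : 0 ≤ A) (hB : 0 ≤ B) :
    0 ≤ (A * B).trace.re := by
  have hconj : 0 ≤ CFC.sqrt A * B * CFC.sqrt A :=
    (CFC.sqrt_nonneg A).isSelfAdjoint.conjugate_nonneg hB
  have htr : (CFC.sqrt A * B * CFC.sqrt A).trace = (A * B).trace := by
    rw [Matrix.trace_mul_cycle, CFC.sqrt_mul_sqrt_self A hA]
  simpa [htr] using re_trace_mono hconj

lemma exists_contraction_conjTranspose_mul_eq_sqrt (B : Matrix k k ℂ) :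
    ∃ W : Matrix k k ℂ, Wᴴ * W ≤ 1 ∧ Wᴴ * B = CFC.sqrt (Bᴴ * B) := by
  set M := Bᴴ * B
  have hM : 0 ≤ M := (Matrix.posSemidef_conjTranspose_mul_self B).nonneg
  have hcont (f : ℝ → ℝ) : ContinuousOn f (spectrum ℝ M) := M.finite_real_spectrum.continuousOn f
  -- `(√0)⁻¹ = 0`, so `P` is the square root of the pseudo-inverse of `M` and `B * P` is a
  -- partial isometry.
  set P := cfc (fun x : ℝ => (√x)⁻¹) M
  have hP : Pᴴ = P := (cfc_predicate _ M : IsSelfAdjoint P)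
  refine ⟨B * P, ?_, ?_⟩
  · have hWW : (B * P)ᴴ * (B * P) = cfc (fun x : ℝ => (√x)⁻¹ * x * (√x)⁻¹) M := by
      rw [cfc_mul _ _ M (hcont _) (hcont _), cfc_mul _ _ M (hcont _) (hcont _), cfc_id' ℝ M,
        Matrix.conjTranspose_mul, hP]
      simp only [P, M, mul_assoc]
    rw [hWW]
    refine cfc_le_one _ M fun x _ => ?_
    rcases le_or_gt x 0 with hx | hx
    · simp [Real.sqrt_eq_zero'.mpr hx]
    · rw [inv_mul_eq_div, Real.div_sqrt, mul_inv_cancel₀ (Real.sqrt_pos.mpr hx).ne']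
  · have hsqrt : Real.sqrt = fun x => (√x)⁻¹ * x := by
      ext x
      rw [inv_mul_eq_div, Real.div_sqrt]
    rw [CFC.sqrt_eq_real_sqrt M hM, cfcₙ_eq_cfc (hf0 := Real.sqrt_zero), hsqrt,
      cfc_mul _ _ M (hcont _) (hcont _), cfc_id' ℝ M hM.isSelfAdjoint,
      Matrix.conjTranspose_mul, hP, mul_assoc]

lemma norm_trace_mul_sqrt_mul_mul_sqrt_le {W R S Θ : Matrix k k ℂ} (hW : Wᴴ * W ≤ 1)
    (hR : 0 ≤ R) (hS : 0 ≤ S) (hΘ : 0 ≤ Θ) :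
    ‖(Wᴴ * CFC.sqrt R * Θ * CFC.sqrt S).trace‖ ≤ √(Θ * S).trace.re * √(Θ * R).trace.re := by
  set T := CFC.sqrt Θ
  have hT : Tᴴ = T := conjTranspose_cfcSqrt Θ
  have hΘT : T * T = Θ := CFC.sqrt_mul_sqrt_self Θ hΘ
  have hcongr : (Wᴴ * CFC.sqrt R * Θ * CFC.sqrt S).trace
      = ((W * CFC.sqrt S * T)ᴴ * (CFC.sqrt R * T)).trace := by
    calc _ = ((Wᴴ * CFC.sqrt R * T) * (T * CFC.sqrt S)).trace := by
          simp only [← hΘT, mul_assoc]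
      _ = ((T * CFC.sqrt S) * (Wᴴ * CFC.sqrt R * T)).trace := Matrix.trace_mul_comm _ _
      _ = _ := by simp only [Matrix.conjTranspose_mul, hT, conjTranspose_cfcSqrt, mul_assoc]
  have hX : ((W * CFC.sqrt S * T)ᴴ * (W * CFC.sqrt S * T)).trace.re ≤ (Θ * S).trace.re := by
    have hle := star_left_conjugate_le_conjugate hW (CFC.sqrt S * T)
    calc _ = (star (CFC.sqrt S * T) * (Wᴴ * W) * (CFC.sqrt S * T)).trace.re := by
          simp only [Matrix.star_eq_conjTranspose, Matrix.conjTranspose_mul, mul_assoc]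
      _ ≤ (star (CFC.sqrt S * T) * 1 * (CFC.sqrt S * T)).trace.re := re_trace_mono hle
      _ = (Θ * S).trace.re := by
          simp only [Matrix.star_eq_conjTranspose, Matrix.conjTranspose_mul, hT,
            conjTranspose_cfcSqrt, mul_one]
          rw [mul_assoc, ← mul_assoc (CFC.sqrt S), CFC.sqrt_mul_sqrt_self S hS,
            Matrix.trace_mul_comm, mul_assoc, hΘT, Matrix.trace_mul_comm]
  have hY : ((CFC.sqrt R * T)ᴴ * (CFC.sqrt R * T)).trace = (Θ * R).trace := by
    simp only [Matrix.conjTranspose_mul, hT, conjTranspose_cfcSqrt]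
    rw [mul_assoc, ← mul_assoc (CFC.sqrt R), CFC.sqrt_mul_sqrt_self R hR,
      Matrix.trace_mul_comm, mul_assoc, hΘT, Matrix.trace_mul_comm]
  rw [hcongr, ← hY]
  exact (norm_trace_conjTranspose_mul_le _ _).trans (by gcongr)

lemma fid_eq_re_trace_sqrt {ρ σ : Matrix k k ℂ} (hρ : 0 ≤ ρ) (hσ : 0 ≤ σ) :
    fid ρ σ = (CFC.sqrt (CFC.sqrt σ * ρ * CFC.sqrt σ)).trace.re := by
  have hM : 0 ≤ CFC.sqrt σ * ρ * CFC.sqrt σ :=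
    (CFC.sqrt_nonneg σ).isSelfAdjoint.conjugate_nonneg hρ
  rw [fid, msqrt_eq_cfcSqrt (Matrix.nonneg_iff_posSemidef.mp hσ),
    msqrt_eq_cfcSqrt (Matrix.nonneg_iff_posSemidef.mp hM)]

lemma fid_nonneg {ρ σ : Matrix k k ℂ} (hρ : 0 ≤ ρ) (hσ : 0 ≤ σ) : 0 ≤ fid ρ σ := by
  simpa [fid_eq_re_trace_sqrt hρ hσ] using
    re_trace_mono (CFC.sqrt_nonneg (CFC.sqrt σ * ρ * CFC.sqrt σ))

lemma fid_le_sqrt_mul_sqrt_add_sqrt_mul_sqrt {ρ σ Λ : Matrix k k ℂ} (hρ : 0 ≤ ρ) (hσ : 0 ≤ σ)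
    (hΛ₀ : 0 ≤ Λ) (hΛ₁ : Λ ≤ 1) :
    fid ρ σ ≤ √(Λ * σ).trace.re * √(Λ * ρ).trace.re
      + √((1 - Λ) * σ).trace.re * √((1 - Λ) * ρ).trace.re := by
  obtain ⟨W, hW, hWB⟩ := exists_contraction_conjTranspose_mul_eq_sqrt (CFC.sqrt ρ * CFC.sqrt σ)
  have hBB : (CFC.sqrt ρ * CFC.sqrt σ)ᴴ * (CFC.sqrt ρ * CFC.sqrt σ)
      = CFC.sqrt σ * ρ * CFC.sqrt σ := by
    rw [Matrix.conjTranspose_mul, conjTranspose_cfcSqrt, conjTranspose_cfcSqrt, mul_assoc,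
      ← mul_assoc (CFC.sqrt ρ), CFC.sqrt_mul_sqrt_self ρ hρ, ← mul_assoc]
  have hsplit : Wᴴ * (CFC.sqrt ρ * CFC.sqrt σ)
      = Wᴴ * CFC.sqrt ρ * Λ * CFC.sqrt σ + Wᴴ * CFC.sqrt ρ * (1 - Λ) * CFC.sqrt σ := by
    noncomm_ring
  rw [fid_eq_re_trace_sqrt hρ hσ, ← hBB, ← hWB, hsplit, Matrix.trace_add, Complex.add_re]
  gcongr <;> refine (Complex.re_le_norm _).trans (norm_trace_mul_sqrt_mul_mul_sqrt_le hW hρ hσ ?_)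
  exacts [hΛ₀, sub_nonneg.mpr hΛ₁]

lemma sq_add_sq_sub_le_one {a a' b b' : ℝ} (ha : 0 ≤ a) (hb : 0 ≤ b) (haa' : a ^ 2 + a' ^ 2 = 1)
    (hbb' : b ^ 2 + b' ^ 2 = 1) :
    (b * a + b' * a') ^ 2 + (b - a) ^ 2 ≤ 1 := by
  have hle : b * a + b' * a' ≤ 1 := by nlinarith [sq_nonneg (b - a), sq_nonneg (b' - a')]
  have hid :
      (b * a + b' * a') ^ 2 + (b - a) ^ 2 = 1 - 2 * (b * a) * (1 - (b * a + b' * a')) := by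
    linear_combination b' ^ 2 * haa' + (1 - a ^ 2) * hbb'
  nlinarith [mul_nonneg (mul_nonneg hb ha) (sub_nonneg.mpr hle)]

lemma abs_sqrt_sub_sqrt_le_sqrt_one_sub_sq {p q F : ℝ} (hp₀ : 0 ≤ p) (hp₁ : p ≤ 1) (hq₀ : 0 ≤ q)
    (hq₁ : q ≤ 1) (hF₀ : 0 ≤ F) (hF : F ≤ √q * √p + √(1 - q) * √(1 - p)) :
    |√q - √p| ≤ √(1 - F ^ 2) := by
  have hsq {x : ℝ} (h₀ : 0 ≤ x) (h₁ : x ≤ 1) : √x ^ 2 + √(1 - x) ^ 2 = 1 := by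
    rw [Real.sq_sqrt h₀, Real.sq_sqrt (sub_nonneg.mpr h₁)]
    ring
  rw [← Real.sqrt_sq_eq_abs]
  refine Real.sqrt_le_sqrt ?_
  nlinarith [sq_add_sq_sub_le_one (Real.sqrt_nonneg p) (Real.sqrt_nonneg q) (hsq hp₀ hp₁)
    (hsq hq₀ hq₁), pow_le_pow_left₀ hF₀ hF 2]

end

/-- `|√Tr(Λσ) − √Tr(Λρ)| ≤ P(ρ,σ)` for any test `0 ≤ Λ ≤ I`. -/
theorem statement0 {n : Type*} [Fintype n] [DecidableEq n]
    (ρ σ Λ : Matrix n n ℂ) (hρ : IsDensity ρ) (hσ : IsDensity σ) (hΛ : IsTest Λ) :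
    |Real.sqrt ((Λ * σ).trace.re) - Real.sqrt ((Λ * ρ).trace.re)| ≤ Pdist ρ σ := by
  obtain ⟨hρ₀, hρ₁⟩ := hρ
  obtain ⟨hσ₀, hσ₁⟩ := hσ
  obtain ⟨hΛ₀, hΛ₁⟩ := hΛ
  rw [← Matrix.nonneg_iff_posSemidef] at hρ₀ hσ₀ hΛ₀
  rw [← Matrix.le_iff] at hΛ₁
  have htr {τ : Matrix n n ℂ} (hτ : τ.trace = 1) :
      ((1 - Λ) * τ).trace.re = 1 - (Λ * τ).trace.re := by
    simp [Matrix.sub_mul, Matrix.trace_sub, hτ]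
  have hbounds {τ : Matrix n n ℂ} (hτ₀ : 0 ≤ τ) (hτ₁ : τ.trace = 1) :
      0 ≤ (Λ * τ).trace.re ∧ (Λ * τ).trace.re ≤ 1 := by
    have hcompl := re_trace_mul_nonneg (sub_nonneg.mpr hΛ₁) hτ₀
    rw [htr hτ₁] at hcompl
    exact ⟨re_trace_mul_nonneg hΛ₀ hτ₀, by linarith⟩
  have hF := fid_le_sqrt_mul_sqrt_add_sqrt_mul_sqrt hρ₀ hσ₀ hΛ₀ hΛ₁
  rw [htr hρ₁, htr hσ₁] at hF
  rw [Pdist]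
  exact abs_sqrt_sub_sqrt_le_sqrt_one_sub_sq (hbounds hρ₀ hρ₁).1 (hbounds hρ₀ hρ₁).2
    (hbounds hσ₀ hσ₁).1 (hbounds hσ₀ hσ₁).2 (fid_nonneg hρ₀ hσ₀) hF

end QIT
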